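/- arXiv:2212.14598 — 2 statements merged into one kernel-verified Lean document; each statement's English description precedes it below -/
import Mathlib

section
/- Let O be a unary operadic category and p : ∫_O S → O the projection from the Grothendieck construction of a pseudo-unital Set-valued O-operad S. Then p is a discrete operadic fibration: for any morphism f : T → S in O with fiber F, and any objects ε ∈ S(F) and s ∈ S(S), there exists a unique morphism σ : t → s in ∫_O S with fiber ε and p(σ) = f (namely t = γ_f(ε, s) and σ = (ε, f)). -/
open CategoryTheory

universe w v u

/-- A (strict, non-unital) unary operadic category: a category `O` together
with fiber functors, encoded by the fiber `fib f` of every morphism, the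
induced maps `fibMap` between fibers of morphisms over a common target
(functorially), and the axiom that the fiber of a map equals the fiber of the
induced map between fibers. -/
structure UnaryOperadicCat (O : Type u) [Category.{v} O] where
  fib : ∀ {X S : O}, (X ⟶ S) → O
  fibMap : ∀ {X Y S : O} (f : X ⟶ S) (g : Y ⟶ S) (φ : X ⟶ Y),
      φ ≫ g = f → (fib f ⟶ fib g)
  fibMap_id : ∀ {X S : O} (f : X ⟶ S),
      fibMap f f (𝟙 X) (Category.id_comp f) = 𝟙 (fib f)
  fibMap_comp : ∀ {X Y Z S : O} (f : X ⟶ S) (g : Y ⟶ S) (h : Z ⟶ S)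
      (φ : X ⟶ Y) (ψ : Y ⟶ Z) (hφ : φ ≫ g = f) (hψ : ψ ≫ h = g),
      fibMap f h (φ ≫ ψ) (by rw [Category.assoc, hψ, hφ]) =
        fibMap f g φ hφ ≫ fibMap g h ψ hψ
  fib_fibMap : ∀ {X Y S : O} (f : X ⟶ S) (g : Y ⟶ S) (φ : X ⟶ Y)
      (h : φ ≫ g = f), fib (fibMap f g φ h) = fib φ

/-- A pseudo-unital `O`-operad in `Set`: sets `P A` with composition maps
`γ_h : P(fib h) × P B → P A` for `h : A ⟶ B`, associative in the operadic
sense, together with pseudo-units `e t ∈ P (fib (𝟙 T))` for every `t ∈ P T`,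
satisfying the left and right pseudo-unit equations of Definition 3.7. -/
structure PseudoUnitalSetOperad {O : Type u} [Category.{v} O]
    (Q : UnaryOperadicCat O) : Type (max u v (w + 1)) where
  P : O → Type w
  γ : ∀ {A B : O} (h : A ⟶ B), P (Q.fib h) → P B → P A
  γassoc : ∀ {A B C : O} (f : A ⟶ B) (g : B ⟶ C)
      (x : P (Q.fib f)) (y : P (Q.fib g)) (z : P C),
      γ f x (γ g y z) =
        γ (f ≫ g)
          (γ (Q.fibMap (f ≫ g) g f rfl)
            (cast (congrArg P (Q.fib_fibMap (f ≫ g) g f rfl)).symm x) y) z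
  e : ∀ {T : O}, P T → P (Q.fib (𝟙 T))
  pu_left : ∀ {T : O} (t : P T), γ (𝟙 T) (e t) t = t
  pu_left' : ∀ {T C : O} (ξ : T ⟶ C) (ρ : P (Q.fib ξ)) (c : P C),
      γ (Q.fibMap ξ ξ (𝟙 T) (Category.id_comp ξ))
        (cast (congrArg P (Q.fib_fibMap ξ ξ (𝟙 T) (Category.id_comp ξ))).symm
          (e (γ ξ ρ c))) ρ = ρ
  pu_right : ∀ {S T : O} (f : S ⟶ T) (t : P T) (φ : P (Q.fib f)),
      γ (Q.fibMap f (𝟙 T) f (Category.comp_id f))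
        (cast (congrArg P (Q.fib_fibMap f (𝟙 T) f (Category.comp_id f))).symm φ)
        (e t) = φ

variable {O : Type u} [Category.{v} O] (Q : UnaryOperadicCat O)
variable (𝒮 : PseudoUnitalSetOperad.{w} Q)

/-- Objects of the Grothendieck construction `∫_O 𝒮`: elements `t ∈ 𝒮(T)`. -/
def GObj : Type (max u w) := Σ T : O, 𝒮.P T

/-- Morphisms `s → t` of `∫_O 𝒮`: pairs `(f, ε)` with `f : S ⟶ T`,
`ε ∈ 𝒮(fib f)` and `γ_f(ε, t) = s`. -/
structure GHom (a b : GObj Q 𝒮) where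
  f : a.1 ⟶ b.1
  ε : 𝒮.P (Q.fib f)
  w : 𝒮.γ f ε b.2 = a.2

/-- The identity `(e_t, 𝟙_T) : t → t` of `∫_O 𝒮`. -/
def Gid (a : GObj Q 𝒮) : GHom Q 𝒮 a a := ⟨𝟙 a.1, 𝒮.e a.2, 𝒮.pu_left a.2⟩

/-- Composition in `∫_O 𝒮`: the composite of `(f, ω) : a → b` and
`(g, y) : b → c` is `(f ≫ g, γ_{f_C}(ω, y))`. -/
def Gcomp {a b c : GObj Q 𝒮} (u : GHom Q 𝒮 a b) (v : GHom Q 𝒮 b c) :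
    GHom Q 𝒮 a c :=
  ⟨u.f ≫ v.f,
   𝒮.γ (Q.fibMap (u.f ≫ v.f) v.f u.f rfl)
     (cast (congrArg 𝒮.P (Q.fib_fibMap (u.f ≫ v.f) v.f u.f rfl)).symm u.ε) v.ε,
   by rw [← 𝒮.γassoc, v.w]; exact u.w⟩

theorem ghom_heq {T S' : O} {s : 𝒮.P S'} {t t' : 𝒮.P T} (h : t = t')
    (u : GHom Q 𝒮 ⟨T, t⟩ ⟨S', s⟩) (v : GHom Q 𝒮 ⟨T, t'⟩ ⟨S', s⟩)
    (hf : u.f = v.f) (hε : HEq u.ε v.ε) : HEq u v := by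
  subst h
  cases u; cases v
  dsimp at hf
  subst hf
  cases eq_of_heq hε
  rfl

/-- The projection `p : ∫_O 𝒮 → O` of the Grothendieck construction of a
pseudo-unital `Set`-valued operad is a discrete operadic fibration: for every
morphism `f : T ⟶ S'` of `O` with fiber `F`, every `ε ∈ 𝒮(F)` and every
`s ∈ 𝒮(S')`, there is a unique morphism `σ : t → s` in `∫_O 𝒮` with fiber
`ε` lying over `f` (namely `t = γ_f(ε, s)` and `σ = (ε, f)`). -/
theorem grothendieck_projection_is_discrete_operadic_fibration :
    ∀ {T S' : O} (f : T ⟶ S') (ε : 𝒮.P (Q.fib f)) (s : 𝒮.P S'),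
      ∃! σ : Σ t : 𝒮.P T, GHom Q 𝒮 ⟨T, t⟩ ⟨S', s⟩,
        σ.2.f = f ∧ HEq σ.2.ε ε := by
  intro T S' f ε s
  refine ⟨⟨𝒮.γ f ε s, ⟨f, ε, rfl⟩⟩, ⟨rfl, HEq.rfl⟩, ?_⟩
  rintro ⟨t, u⟩ ⟨hf, hε⟩
  dsimp at hf hε
  subst hf
  cases eq_of_heq hε
  have ht : t = 𝒮.γ u.f u.ε s := u.w.symm
  exact Sigma.ext ht (ghom_heq Q 𝒮 ht u ⟨u.f, u.ε, rfl⟩ rfl HEq.rfl)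
end

section
/- Let A be a small category and A_⊙ the category obtained by freely adjoining a terminal object ⊙. Then the assignment sending an object X of A to the unique morphism X → ⊙, and an object (X → Y) of D(A) to itself viewed in D(A_⊙), defines a fully faithful functor from the tautological category T(A) := A ⊔ D(A) into D(A_⊙) which is injective on objects and whose image consists of all objects of D(A_⊙) except ⊙ → ⊙, and which commutes with the fiber functors (is an operadic functor). -/
/-!
Every object of `A_⊙` has exactly one arrow to `⊙`, so `A_⊙/⊙ ≃ A_⊙` is a copy of `A` plus the
single object `⊙ → ⊙`; no arrow leaves `⊙` towards `c ∈ A`, so `A_⊙/c = A/c`. Hence the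
functor is the sum of `A ≃ A_⊙/⊙ ∖ {⊙ → ⊙}` and of `𝒟` applied to the inclusion `A → A_⊙`,
which is fully faithful and injective on objects. The two summands land in different
components of the coproduct `𝒟(A_⊙)`, so there are no arrows between their images. The fibers
match because `𝒟(F)` commutes with fibers for every functor `F`, and for `g : S → T` in `A`
both fibers are `g` itself.
-/

open CategoryTheory

universe u

/-- The décollage `𝒟(B) := ∐_{c ∈ B} B/c`. -/
abbrev DCat (B : Type u) [SmallCategory B] : Type u := Σ c : B, Over c

/-- The fiber of a morphism of `𝒟(B)`: the fiber of
`φ : (f' : X' → c) ⟶ (f'' : X'' → c)` is `φ`, regarded as an object of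
`B/X''`. -/
def fibD {B : Type u} [SmallCategory B] :
    ∀ {x y : DCat B}, (x ⟶ y) → DCat B :=
  fun {x y} σ =>
    match x, y, σ with
    | ⟨_, _⟩, ⟨_, g⟩, Sigma.SigmaHom.mk φ => ⟨g.left, Over.mk φ.left⟩

/-- The fiber structure of the tautological operadic category
`𝒯(A) = A ⊔ 𝒟(A)`: the fiber of `g : S → T` in `A` is `g`, regarded as an
object of `A/T ⊆ 𝒟(A)`, while the fiber of a morphism of `𝒟(A)` given by
`f : X → S` is `f ∈ A/S ⊆ 𝒟(A)`. -/
def fibT {A : Type u} [SmallCategory A] :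
    ∀ {x y : A ⊕ DCat A}, (x ⟶ y) → (A ⊕ DCat A) :=
  fun {x y} σ =>
    match x, y, σ with
    | Sum.inl _, Sum.inl Y, g => Sum.inr ⟨Y, Over.mk g.down⟩
    | Sum.inr _, Sum.inr _, σ => Sum.inr (fibD σ.down)
    | Sum.inl _, Sum.inr _, σ => PEmpty.elim σ
    | Sum.inr _, Sum.inl _, σ => PEmpty.elim σ

namespace CategoryTheory

namespace Functor

variable {A B C : Type*} [Category A] [Category B] [Category C] (F : A ⥤ C) (G : B ⥤ C)

lemma sum'_obj_eq_elim : (F.sum' G).obj = Sum.elim F.obj G.obj := by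
  funext x; cases x <;> rfl

instance [F.Faithful] [G.Faithful] : (F.sum' G).Faithful where
  map_injective {x y} f g h := by
    match x, y with
    | .inl _, .inl _ => exact ULift.ext _ _ (F.map_injective h)
    | .inr _, .inr _ => exact ULift.ext _ _ (G.map_injective h)

lemma sum'_full [F.Full] [G.Full] (hFG : ∀ a b, IsEmpty (F.obj a ⟶ G.obj b))
    (hGF : ∀ a b, IsEmpty (G.obj b ⟶ F.obj a)) : (F.sum' G).Full where
  map_surjective {x y} φ := by
    match x, y with
    | .inl _, .inl _ => exact ⟨ULift.up (F.preimage φ), F.map_preimage φ⟩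
    | .inr _, .inr _ => exact ⟨ULift.up (G.preimage φ), G.map_preimage φ⟩
    | .inl a, .inr b => exact (hFG a b).elim φ
    | .inr b, .inl a => exact (hGF a b).elim φ

end Functor

namespace Sigma

variable {I : Type*} {C : I → Type*} [∀ i, Category (C i)]

lemma fst_eq_of_hom {X Y : Σ i, C i} (f : X ⟶ Y) : X.1 = Y.1 := by
  obtain ⟨_⟩ := f; rfl

lemma isEmpty_hom_of_fst_ne {X Y : Σ i, C i} (h : X.1 ≠ Y.1) : IsEmpty (X ⟶ Y) :=
  ⟨fun f => h (fst_eq_of_hom f)⟩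

end Sigma

lemma Over.post_obj_injective {T D : Type*} [Category T] [Category D] {X : T} {F : T ⥤ D}
    (hF : Function.Injective F.obj) [F.Faithful] :
    Function.Injective (Over.post (X := X) F).obj := by
  intro f f' h
  obtain ⟨Y, ⟨⟨⟩⟩, f⟩ := f
  obtain ⟨Y', ⟨⟨⟩⟩, f'⟩ := f'
  obtain rfl : Y = Y' := hF (congrArg Comma.left h)
  obtain rfl : f = f' := F.map_injective (eq_of_heq (Comma.mk.inj h).2.2)
  rfl

namespace WithTerminal

variable {C : Type*} [Category C]

def overStar : C ⥤ Over (star : WithTerminal C) :=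
  incl ⋙ (Over.equivalenceOfIsTerminal starTerminal).inverse

instance : (overStar (C := C)).Full := inferInstanceAs (incl ⋙ _).Full

instance : (overStar (C := C)).Faithful := inferInstanceAs (incl ⋙ _).Faithful

lemma overStar_obj_injective : Function.Injective (overStar (C := C)).obj :=
  fun _ _ h => of.inj (congrArg Comma.left h)

lemma range_overStar_obj :
    Set.range (overStar (C := C)).obj = {f | f ≠ Over.mk (𝟙 star)} := by
  ext ⟨Y, ⟨⟨⟩⟩, f⟩
  cases Y with
  | of X =>
    obtain ⟨⟩ := f
    exact ⟨fun _ h => (nomatch congrArg Comma.left h), fun _ => ⟨X, rfl⟩⟩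
  | star =>
    obtain ⟨⟩ := f
    exact ⟨fun ⟨_, h⟩ => (nomatch congrArg Comma.left h), fun h => (h rfl).elim⟩

lemma post_incl_obj_surjective (c : C) :
    Function.Surjective (Over.post (X := c) (incl : C ⥤ WithTerminal C)).obj := by
  rintro ⟨Y, ⟨⟨⟩⟩, f⟩
  cases Y with
  | of X => exact ⟨Over.mk (down f), rfl⟩
  | star => exact f.elim

end WithTerminal

end CategoryTheory

open CategoryTheory

namespace DCat

variable {B B' : Type u} [SmallCategory B] [SmallCategory B'] (F : B ⥤ B')

def map : DCat B ⥤ DCat B' :=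
  Sigma.desc fun c => Over.post F ⋙ Sigma.incl (F.obj c)

instance [F.Faithful] : (map F).Faithful where
  map_injective {x y} φ ψ h := by
    obtain ⟨φ⟩ := φ
    obtain ⟨ψ⟩ := ψ
    exact congrArg Sigma.SigmaHom.mk ((Over.post F).map_injective (Sigma.SigmaHom.mk.inj h))

lemma map_full (hF : Function.Injective F.obj) [F.Full] [F.Faithful] : (map F).Full where
  map_surjective {x y} φ := by
    obtain ⟨c, f⟩ := x
    obtain ⟨c', f'⟩ := y
    obtain rfl : c = c' := hF (Sigma.fst_eq_of_hom φ)
    obtain ⟨ψ⟩ := φ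
    exact ⟨Sigma.SigmaHom.mk ((Over.post F).preimage ψ),
      congrArg Sigma.SigmaHom.mk ((Over.post F).map_preimage ψ)⟩

lemma map_obj_injective (hF : Function.Injective F.obj) [F.Faithful] :
    Function.Injective (map F).obj := by
  rintro ⟨c, f⟩ ⟨c', f'⟩ h
  obtain ⟨hc, hf⟩ := Sigma.mk.inj_iff.mp h
  obtain rfl : c = c' := hF hc
  obtain rfl : f = f' := Over.post_obj_injective hF (eq_of_heq hf)
  rfl

lemma map_fibD {x y : DCat B} (σ : x ⟶ y) : (map F).obj (fibD σ) = fibD ((map F).map σ) := by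
  obtain ⟨_⟩ := σ
  rfl

end DCat

section

variable (A : Type u) [SmallCategory A]

def tautologicalToDecollage : (A ⊕ DCat A) ⥤ DCat (WithTerminal A) :=
  (WithTerminal.overStar ⋙ Sigma.incl WithTerminal.star).sum' (DCat.map WithTerminal.incl)

instance : (DCat.map (WithTerminal.incl : A ⥤ _)).Full :=
  DCat.map_full _ fun _ _ => WithTerminal.of.inj

instance : (tautologicalToDecollage A).Full :=
  Functor.sum'_full _ _ (fun _ _ => Sigma.isEmpty_hom_of_fst_ne nofun)
    (fun _ _ => Sigma.isEmpty_hom_of_fst_ne nofun)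

instance : (tautologicalToDecollage A).Faithful := by
  unfold tautologicalToDecollage; infer_instance

lemma tautologicalToDecollage_obj_injective :
    Function.Injective (tautologicalToDecollage A).obj := by
  rw [tautologicalToDecollage, Functor.sum'_obj_eq_elim, Sum.elim_injective]
  exact ⟨sigma_mk_injective.comp WithTerminal.overStar_obj_injective,
    DCat.map_obj_injective _ fun _ _ => WithTerminal.of.inj,
    fun _ _ h => nomatch congrArg Sigma.fst h⟩

lemma range_tautologicalToDecollage_obj :
    Set.range (tautologicalToDecollage A).obj =
      {x | x ≠ ⟨WithTerminal.star, Over.mk (𝟙 WithTerminal.star)⟩} := by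
  rw [tautologicalToDecollage, Functor.sum'_obj_eq_elim, Set.Sum.elim_range]
  ext ⟨c, f⟩
  cases c with
  | of c =>
    refine ⟨fun _ h => (nomatch congrArg Sigma.fst h), fun _ => Or.inr ?_⟩
    obtain ⟨g, rfl⟩ := WithTerminal.post_incl_obj_surjective c f
    exact ⟨⟨c, g⟩, rfl⟩
  | star =>
    have hD (p : DCat A) : (DCat.map WithTerminal.incl).obj p ≠ ⟨WithTerminal.star, f⟩ :=
      fun h => nomatch congrArg Sigma.fst h
    simpa [hD] using Set.ext_iff.mp WithTerminal.range_overStar_obj f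

lemma tautologicalToDecollage_obj_fibT {x y : A ⊕ DCat A} (σ : x ⟶ y) :
    (tautologicalToDecollage A).obj (fibT σ) = fibD ((tautologicalToDecollage A).map σ) := by
  match x, y, σ with
  | .inl _, .inl _, _ => rfl
  | .inr _, .inr _, σ => exact DCat.map_fibD _ σ.down

end

/-- The tautological unary operadic category `𝒯(A) = A ⊔ 𝒟(A)` embeds into
`𝒟(A_⊙)`, where `A_⊙` is `A` with a terminal object `⊙` freely adjoined: the
assignment sending `X ∈ A` to the unique morphism `X → ⊙` and an object
`X → Y` of `𝒟(A)` to itself defines a fully faithful functor, injective on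
objects, whose image consists of all objects of `𝒟(A_⊙)` except `⊙ → ⊙`, and
which commutes with the fiber structures (is an operadic functor). -/
theorem tautological_embeds_into_decollage_of_withTerminal
    (A : Type u) [SmallCategory A] :
    ∃ J : (A ⊕ DCat A) ⥤ DCat (WithTerminal A),
      (∀ X : A,
        J.obj (Sum.inl X) =
          ⟨WithTerminal.star, Over.mk (WithTerminal.homFrom X)⟩) ∧
      (∀ p : DCat A,
        J.obj (Sum.inr p) =
          ⟨WithTerminal.of p.1, (Over.post WithTerminal.incl).obj p.2⟩) ∧
      J.Full ∧ J.Faithful ∧ Function.Injective J.obj ∧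
      (Set.range J.obj =
        {x : DCat (WithTerminal A) |
          x ≠ ⟨WithTerminal.star,
                Over.mk (𝟙 (WithTerminal.star : WithTerminal A))⟩}) ∧
      (∀ {x y : A ⊕ DCat A} (σ : x ⟶ y),
        J.obj (fibT σ) = fibD (J.map σ)) :=
  ⟨tautologicalToDecollage A, fun _ => rfl, fun _ => rfl, inferInstance, inferInstance,
    tautologicalToDecollage_obj_injective A, range_tautologicalToDecollage_obj A,
    tautologicalToDecollage_obj_fibT A⟩
end
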